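/- arXiv:2412.19799 — 5 statements merged into one kernel-verified Lean document; each statement's English description precedes it below -/
import Mathlib

section
/- Let φ be a degree-zero endomorphism of M and let λ ∈ k be an eigenvalue of the induced k-linear map A on M/𝔪M, with algebraic multiplicity μ as a root of the characteristic polynomial of A. Set ψ = (φ − λ·id_M)^μ. Then M is the internal direct sum M = ker ψ ⊕ im ψ of graded submodules, and ker ψ ≠ 0; in particular M → im ψ is a split surjection. -/
open Polynomial DirectSum

set_option maxHeartbeats 1000000
set_option linter.unusedSectionVars false

section helpers
variable {k R M : Type*} [Field k] [CommRing R] [Algebra k R]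
  (𝒜 : ℕ → Submodule k R) [GradedAlgebra 𝒜]
  [AddCommGroup M] [Module k M] [Module R M] [IsScalarTower k R M]
  (ℳ : ℕ → Submodule k M) [SetLike.GradedSMul 𝒜 ℳ] [DirectSum.Decomposition ℳ]

/-- the degree-`n` projection, as an `AddMonoidHom`. -/
def projAH (n : ℕ) : M →+ M where
  toFun x := (DirectSum.decompose ℳ x n : M)
  map_zero' := by simp
  map_add' a b := by
    show (DirectSum.decompose ℳ (a + b) n : M)
        = (DirectSum.decompose ℳ a n : M) + (DirectSum.decompose ℳ b n : M)
    rw [DirectSum.decompose_add, DirectSum.add_apply, Submodule.coe_add]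

lemma projAH_apply (n : ℕ) (x : M) : projAH ℳ n x = (DirectSum.decompose ℳ x n : M) := rfl

lemma decompose_coe_add (a b : M) (n : ℕ) :
    (DirectSum.decompose ℳ (a + b) n : M)
      = (DirectSum.decompose ℳ a n : M) + (DirectSum.decompose ℳ b n : M) :=
  map_add (projAH ℳ n) a b

lemma decompose_coe_sum {ι : Type*} (s : Finset ι) (f : ι → M) (n : ℕ) :
    (DirectSum.decompose ℳ (∑ i ∈ s, f i) n : M)
      = ∑ i ∈ s, (DirectSum.decompose ℳ (f i) n : M) :=
  map_sum (projAH ℳ n) f s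

lemma decompose_smul_homog_left {e : ℕ} {r : R} (hr : r ∈ 𝒜 e) (y : M) (n : ℕ) :
    (DirectSum.decompose ℳ (r • y) n : M)
      = if e ≤ n then r • (DirectSum.decompose ℳ y (n - e) : M) else 0 := by
  induction y using DirectSum.Decomposition.inductionOn ℳ with
  | zero => simp
  | @homogeneous i m =>
      have hmem : r • (m : M) ∈ ℳ (e + i) := SetLike.GradedSMul.smul_mem hr m.2
      by_cases h : n = e + i
      · subst h
        rw [DirectSum.decompose_of_mem_same ℳ hmem, if_pos (Nat.le_add_right _ _),
          Nat.add_sub_cancel_left, DirectSum.decompose_of_mem_same ℳ m.2]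
      · rw [DirectSum.decompose_of_mem_ne ℳ hmem (Ne.symm h)]
        split_ifs with he
        · rw [DirectSum.decompose_of_mem_ne ℳ m.2 (by omega), smul_zero]
        · rfl
  | add a b ha hb =>
      rw [smul_add, decompose_coe_add, ha, hb, decompose_coe_add]
      split_ifs
      · rw [smul_add]
      · rw [add_zero]

lemma decompose_smul_homog_right {m : ℕ} {x : M} (hx : x ∈ ℳ m) (r : R) (n : ℕ) :
    (DirectSum.decompose ℳ (r • x) n : M)
      = if m ≤ n then (DirectSum.decompose 𝒜 r (n - m) : R) • x else 0 := by
  induction r using DirectSum.Decomposition.inductionOn 𝒜 with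
  | zero => simp
  | @homogeneous e c =>
      have hmem : (c : R) • x ∈ ℳ (e + m) := SetLike.GradedSMul.smul_mem c.2 hx
      by_cases h : n = e + m
      · subst h
        rw [DirectSum.decompose_of_mem_same ℳ hmem, if_pos (by omega : m ≤ e + m)]
        rw [(by omega : e + m - m = e), DirectSum.decompose_of_mem_same 𝒜 c.2]
      · rw [DirectSum.decompose_of_mem_ne ℳ hmem (Ne.symm h)]
        split_ifs with he
        · rw [DirectSum.decompose_of_mem_ne 𝒜 c.2 (by omega), zero_smul]
        · rfl
  | add a b ha hb =>
      rw [add_smul, decompose_coe_add, ha, hb,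
        show (DirectSum.decompose 𝒜 (a + b) (n - m) : R)
            = (DirectSum.decompose 𝒜 a (n - m) : R) + (DirectSum.decompose 𝒜 b (n - m) : R)
          from decompose_coe_add 𝒜 a b (n - m)]
      split_ifs
      · rw [add_smul]
      · rw [add_zero]

lemma decompose_endo_comm (g : Module.End R M) (hg : ∀ i : ℕ, ∀ z ∈ ℳ i, g z ∈ ℳ i)
    (z : M) (n : ℕ) :
    (DirectSum.decompose ℳ (g z) n : M) = g (DirectSum.decompose ℳ z n : M) := by
  induction z using DirectSum.Decomposition.inductionOn ℳ with
  | zero => simp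
  | @homogeneous i m =>
      have hmem : g m ∈ ℳ i := hg i m m.2
      by_cases h : n = i
      · subst h
        rw [DirectSum.decompose_of_mem_same ℳ hmem, DirectSum.decompose_of_mem_same ℳ m.2]
      · rw [DirectSum.decompose_of_mem_ne ℳ hmem (Ne.symm h),
          DirectSum.decompose_of_mem_ne ℳ m.2 (Ne.symm h), map_zero]
  | add a b ha hb =>
      rw [map_add, decompose_coe_add, decompose_coe_add, ha, hb, map_add]

end helpers


/-- Let `k` be a field, `R` a commutative ℕ-graded ring with `R₀ = k`,
finitely generated as a `k`-algebra, `𝔪` its irrelevant maximal ideal, and `M` a nonzero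
finitely generated graded `R`-module. Let `φ` be a degree-zero endomorphism of `M`, and let
`λ ∈ k` be an eigenvalue of the induced `k`-linear map `A` on `M/𝔪M`, with algebraic
multiplicity `μ` as a root of the characteristic polynomial of `A`. Set `ψ = (φ - λ·id)^μ`.
Then `M = ker ψ ⊕ im ψ` as an internal direct sum of graded submodules, and `ker ψ ≠ 0`;
in particular `M → im ψ` is a split surjection. -/
theorem statement_4 {k R M : Type*} [Field k] [CommRing R] [Algebra k R]
    (𝒜 : ℕ → Submodule k R) [GradedAlgebra 𝒜]
    (h0 : ∀ x ∈ 𝒜 0, ∃ c : k, algebraMap k R c = x)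
    (hFT : Algebra.FiniteType k R)
    [AddCommGroup M] [Module k M] [Module R M] [IsScalarTower k R M]
    [Module.Finite R M] [Nontrivial M]
    (ℳ : ℕ → Submodule k M) [SetLike.GradedSMul 𝒜 ℳ] [DirectSum.Decomposition ℳ]
    (mM : Submodule R M) (hmM : mM = (HomogeneousIdeal.irrelevant 𝒜).toIdeal • ⊤)
    [Module.Finite k (M ⧸ mM)]
    (φ : Module.End R M) (hφ : ∀ i : ℕ, ∀ x ∈ ℳ i, φ x ∈ ℳ i)
    (A : Module.End k (M ⧸ mM))
    (hA : ∀ x : M, A (Submodule.Quotient.mk x) = Submodule.Quotient.mk (φ x))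
    (lam : k) (hlam : Module.End.HasEigenvalue A lam)
    (μ : ℕ) (hμ : μ = (LinearMap.charpoly A).rootMultiplicity lam)
    (ψ : Module.End R M) (hψ : ψ = (φ - algebraMap k R lam • 1) ^ μ) :
    IsCompl (LinearMap.ker ψ) (LinearMap.range ψ) ∧
    LinearMap.ker ψ ≠ ⊥ ∧
    (∀ x ∈ LinearMap.ker ψ, ∀ i : ℕ, (DirectSum.decompose ℳ x i : M) ∈ LinearMap.ker ψ) ∧
    (∀ x ∈ LinearMap.range ψ, ∀ i : ℕ, (DirectSum.decompose ℳ x i : M) ∈ LinearMap.range ψ) := by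
  classical
  haveI : IsNoetherian k (M ⧸ mM) := isNoetherian_of_isNoetherianRing_of_finite k _
  -- ### Step 1 : a homogeneous family whose classes form a basis of `M ⧸ mM`
  set S : Set (M ⧸ mM) :=
    {v | ∃ (j : ℕ) (y : M), y ∈ ℳ j ∧ Submodule.Quotient.mk y = v} with hSdef
  have hSspan : Submodule.span k S = ⊤ := by
    rw [Submodule.eq_top_iff']
    intro v
    obtain ⟨y, rfl⟩ := Submodule.Quotient.mk_surjective mM v
    have hy : (Submodule.Quotient.mk y : M ⧸ mM) =
        ∑ j ∈ (DirectSum.decompose ℳ y).support,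
          (Submodule.Quotient.mk (DirectSum.decompose ℳ y j : M) : M ⧸ mM) := by
      conv_lhs => rw [← DirectSum.sum_support_decompose ℳ y]
      exact map_sum mM.mkQ _ _
    rw [hy]
    exact Submodule.sum_mem _ fun j _ =>
      Submodule.subset_span ⟨j, _, SetLike.coe_mem _, rfl⟩
  obtain ⟨bs, hbsS, hbspan, hbli⟩ := exists_linearIndependent k S
  rw [hSspan] at hbspan
  have hbfin : bs.Finite := hbli.set_finite_of_isNoetherian
  haveI := hbfin.fintype
  have hchoose : ∀ i : bs, ∃ (j : ℕ) (y : M),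
      y ∈ ℳ j ∧ Submodule.Quotient.mk y = (i : M ⧸ mM) := fun i => hbsS i.2
  choose d x hx hxq using hchoose
  have hbspan' : ⊤ ≤ Submodule.span k (Set.range ((↑) : bs → M ⧸ mM)) := by
    rw [Subtype.range_coe]; exact hbspan.ge
  set b : Module.Basis bs k (M ⧸ mM) := Module.Basis.mk hbli hbspan' with hbdef
  have hb : ∀ i, b i = Submodule.Quotient.mk (x i) := fun i => by
    rw [hbdef, Module.Basis.mk_apply, ← hxq i]
  -- ### Step 2 : graded Nakayama, the `x i` generate `M`
  set N : Submodule R M := Submodule.span R (Set.range x) with hNdef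
  have hkey : ∀ dd : ℕ, ∀ y ∈ ℳ dd, y ∈ N := by
    intro dd
    induction dd using Nat.strong_induction_on with
    | _ dd IH =>
      have hmMc : ∀ z ∈ mM, (DirectSum.decompose ℳ z dd : M) ∈ N := by
        intro z hz
        rw [hmM] at hz
        refine Submodule.smul_induction_on hz ?_ ?_
        · intro r hr u _
          have hr0 : (DirectSum.decompose 𝒜 r 0 : R) = 0 := by
            have h := (HomogeneousIdeal.mem_irrelevant_iff 𝒜 r).mp hr
            rwa [GradedRing.proj_apply] at h
          have hru : r • u = ∑ e ∈ (DirectSum.decompose 𝒜 r).support,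
              ((DirectSum.decompose 𝒜 r e : R) • u) := by
            conv_lhs => rw [← DirectSum.sum_support_decompose 𝒜 r]
            rw [Finset.sum_smul]
          rw [hru, decompose_coe_sum]
          refine Submodule.sum_mem _ fun e _ => ?_
          rw [decompose_smul_homog_left 𝒜 ℳ (SetLike.coe_mem _)]
          split_ifs with hle
          · rcases Nat.eq_zero_or_pos e with rfl | hepos
            · rw [hr0, zero_smul]; exact N.zero_mem
            · exact N.smul_mem _ (IH (dd - e) (by omega) _ (SetLike.coe_mem _))
          · exact N.zero_mem
        · intro u v hu hv
          rw [decompose_coe_add]; exact N.add_mem hu hv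
      intro y hy
      have hmem : (Submodule.Quotient.mk y : M ⧸ mM)
          ∈ Submodule.span k (Set.range fun i : bs => b i) := by
        rw [Module.Basis.span_eq]; trivial
      obtain ⟨a, ha⟩ := (Submodule.mem_span_range_iff_exists_fun k).mp hmem
      set z : M := y - ∑ i, algebraMap k R (a i) • x i with hzdef
      have hmks : mM.mkQ (∑ i, algebraMap k R (a i) • x i) = ∑ i, a i • b i := by
        rw [map_sum]
        refine Finset.sum_congr rfl fun i _ => ?_
        rw [map_smul, algebraMap_smul, hb i, Submodule.mkQ_apply]
      have hz : z ∈ mM := by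
        rw [← Submodule.Quotient.mk_eq_zero]
        have : (Submodule.Quotient.mk z : M ⧸ mM)
            = Submodule.Quotient.mk y - mM.mkQ (∑ i, algebraMap k R (a i) • x i) := by
          rw [hzdef, Submodule.mkQ_apply]
          exact Submodule.Quotient.mk_sub mM
        rw [this, hmks, ha, sub_self]
      have hyz : y = (∑ i, algebraMap k R (a i) • x i) + z := by
        rw [hzdef]; abel
      have h2 : (DirectSum.decompose ℳ y dd : M)
          = (∑ i, (DirectSum.decompose ℳ (algebraMap k R (a i) • x i) dd : M))
            + (DirectSum.decompose ℳ z dd : M) := by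
        conv_lhs => rw [hyz]
        rw [decompose_coe_add, decompose_coe_sum]
      have h3 : ∀ i, (DirectSum.decompose ℳ (algebraMap k R (a i) • x i) dd : M) ∈ N := by
        intro i
        rw [decompose_smul_homog_right 𝒜 ℳ (hx i)]
        split_ifs
        · exact N.smul_mem _ (Submodule.subset_span ⟨i, rfl⟩)
        · exact N.zero_mem
      have h4 : (∑ i, (DirectSum.decompose ℳ (algebraMap k R (a i) • x i) dd : M))
          + (DirectSum.decompose ℳ z dd : M) ∈ N :=
        N.add_mem (Submodule.sum_mem N fun i _ => h3 i) (hmMc z hz)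
      rw [← h2, DirectSum.decompose_of_mem_same ℳ hy] at h4
      exact h4
  have hNtop : Submodule.span R (Set.range x) = ⊤ := by
    rw [Submodule.eq_top_iff']
    intro y
    rw [← DirectSum.sum_support_decompose ℳ y]
    exact Submodule.sum_mem _ fun j _ => hkey j _ (SetLike.coe_mem _)
  -- ### Step 3 : homogeneous matrix representing φ
  have hgen : ∀ y : M, ∃ c : bs → R, ∑ i, c i • x i = y := by
    intro y
    have : y ∈ Submodule.span R (Set.range x) := by rw [hNtop]; trivial
    exact (Submodule.mem_span_range_iff_exists_fun R).mp this
  choose co hco using fun j => hgen (φ (x j))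
  set Cm : Matrix bs bs R := fun i j =>
    if d i ≤ d j then (DirectSum.decompose 𝒜 (co j i) (d j - d i) : R) else 0 with hCmdef
  have hCmem : ∀ i j, Cm i j ∈ 𝒜 (d j - d i) := by
    intro i j
    rw [hCmdef]
    dsimp only
    split_ifs
    · exact SetLike.coe_mem _
    · exact zero_mem _
  have hCm0 : ∀ i j, d j < d i → Cm i j = 0 := by
    intro i j h
    rw [hCmdef]
    exact if_neg (by omega)
  have hrep' : ∀ j, ∑ i, Cm i j • x i = φ (x j) := by
    intro j
    have hphij : φ (x j) ∈ ℳ (d j) := hφ _ _ (hx j)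
    conv_rhs => rw [← DirectSum.decompose_of_mem_same ℳ hphij]
    conv_rhs => rw [← hco j]
    rw [decompose_coe_sum]
    refine Finset.sum_congr rfl fun i _ => ?_
    rw [decompose_smul_homog_right 𝒜 ℳ (hx i), hCmdef]
    dsimp only
    split_ifs with h
    · rfl
    · rw [zero_smul]
  have hrep : Cm.Represents x φ := Matrix.represents_iff'.mpr hrep'
  -- ### Step 4 : Cayley–Hamilton
  have hCH : Polynomial.aeval φ Cm.charpoly = 0 := by
    rw [← Matrix.isRepresentation.eq_toEnd_of_represents R x hNtop ⟨Cm, φ, hrep⟩ hrep]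
    rw [Polynomial.aeval_algHom_apply, ← map_zero (Matrix.isRepresentation.toEnd R x hNtop)]
    congr 1
    ext1
    rw [Polynomial.aeval_subalgebra_coe, Matrix.aeval_self_charpoly, Subalgebra.coe_zero]
  -- ### Step 5 : the scalar matrix
  have hCm00 : ∀ i j, d i = d j → Cm i j ∈ 𝒜 0 := by
    intro i j h
    have := hCmem i j
    rwa [h, Nat.sub_self] at this
  set am : Matrix bs bs k := fun i j =>
    if h : d i = d j then (h0 (Cm i j) (hCm00 i j h)).choose else 0 with hamdef
  have hamC : ∀ i j, d i = d j → algebraMap k R (am i j) = Cm i j := by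
    intro i j h
    rw [hamdef]
    dsimp only
    rw [dif_pos h]
    exact (h0 (Cm i j) (hCm00 i j h)).choose_spec
  have ham0 : ∀ i j, d i ≠ d j → am i j = 0 := by
    intro i j h
    rw [hamdef]
    exact dif_neg h
  -- ### Step 6 : charpoly comparison via block triangularity
  have hBT1 : Cm.BlockTriangular d := fun i j h => hCm0 i j h
  have hBT2 : (am.map (algebraMap k R)).BlockTriangular d := by
    intro i j h
    rw [Matrix.map_apply, ham0 i j (by omega), map_zero]
  have hblocks : ∀ v, Cm.toSquareBlock d v = (am.map (algebraMap k R)).toSquareBlock d v := by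
    intro v
    ext i j
    simp only [Matrix.toSquareBlock_def, Matrix.map_apply]
    exact (hamC i.1 j.1 (by rw [i.2, j.2])).symm
  have hcp : Cm.charpoly = am.charpoly.map (algebraMap k R) := by
    rw [hBT1.charpoly, ← Matrix.charpoly_map am (algebraMap k R), hBT2.charpoly]
    exact Finset.prod_congr rfl fun v _ => by rw [hblocks v]
  -- ### Step 7 : `am` is the matrix of `A`, so `charpoly A = charpoly am`
  have hAeq : A = Matrix.toLin b b am := by
    apply b.ext
    intro j
    rw [Matrix.toLin_self, hb j, hA (x j)]
    have : (Submodule.Quotient.mk (φ (x j)) : M ⧸ mM) = ∑ i, am i j • b i := by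
      rw [← hrep' j, ← Submodule.mkQ_apply, map_sum]
      refine Finset.sum_congr rfl fun i _ => ?_
      rcases lt_trichotomy (d i) (d j) with hlt | heq | hgt
      · have hirr : Cm i j ∈ (HomogeneousIdeal.irrelevant 𝒜).toIdeal := by
          rw [HomogeneousIdeal.mem_iff, HomogeneousIdeal.mem_irrelevant_iff,
            GradedRing.proj_apply]
          exact DirectSum.decompose_of_mem_ne 𝒜 (hCmem i j) (show d j - d i ≠ 0 by omega)
        have hmem : Cm i j • x i ∈ mM := by
          rw [hmM]; exact Submodule.smul_mem_smul hirr Submodule.mem_top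
        rw [Submodule.mkQ_apply, (Submodule.Quotient.mk_eq_zero mM).mpr hmem,
          ham0 i j (by omega), zero_smul]
      · rw [← hamC i j heq, map_smul, algebraMap_smul, Submodule.mkQ_apply, ← hb i]
      · rw [hCm0 i j hgt, zero_smul, map_zero, ham0 i j (by omega), zero_smul]
    rw [this]
  have hAchar : LinearMap.charpoly A = am.charpoly := by
    rw [← LinearMap.charpoly_toMatrix A b]
    congr 1
    rw [hAeq, LinearMap.toMatrix_toLin]
  -- ### Step 8 : annihilating polynomial over `k`
  have hP : Polynomial.aeval φ ((LinearMap.charpoly A).map (algebraMap k R)) = 0 := by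
    rw [hAchar, ← hcp]; exact hCH
  -- ### Step 9 : endgame
  subst hμ
  set p : Polynomial k := LinearMap.charpoly A with hpdef
  have hpm : p.Monic := LinearMap.charpoly_monic A
  have hp0 : p ≠ 0 := hpm.ne_zero
  have hfac := pow_mul_divByMonic_rootMultiplicity_eq p lam
  set q : Polynomial k := p /ₘ (X - C lam) ^ (p.rootMultiplicity lam) with hqdef
  have hqe : q.eval lam ≠ 0 := eval_divByMonic_pow_rootMultiplicity_ne_zero lam hp0
  have hcop1 : IsCoprime (X - C lam) q := by
    refine ⟨-(C (q.eval lam)⁻¹ * (q /ₘ (X - C lam))), C (q.eval lam)⁻¹, ?_⟩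
    have hCe : C (q.eval lam) = q - (X - C lam) * (q /ₘ (X - C lam)) := by
      rw [← modByMonic_X_sub_C_eq_C_eval]
      exact eq_sub_of_add_eq (modByMonic_add_div q (X - C lam))
    calc -(C (q.eval lam)⁻¹ * (q /ₘ (X - C lam))) * (X - C lam) + C (q.eval lam)⁻¹ * q
        = C (q.eval lam)⁻¹ * (q - (X - C lam) * (q /ₘ (X - C lam))) := by ring
      _ = C (q.eval lam)⁻¹ * C (q.eval lam) := by rw [← hCe]
      _ = 1 := by rw [← C_mul, inv_mul_cancel₀ hqe, C_1]
  have hcop : IsCoprime ((X - C lam) ^ p.rootMultiplicity lam) q := hcop1.pow_left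
  obtain ⟨u, v, huv⟩ := hcop
  set f := algebraMap k R with hfdef
  set ξ : Polynomial R := X - C (f lam) with hξdef
  have hmapfac : ξ ^ (p.rootMultiplicity lam) * (q.map f) = p.map f := by
    have := congrArg (Polynomial.map f) hfac
    rwa [Polynomial.map_mul, Polynomial.map_pow, Polynomial.map_sub, Polynomial.map_X,
      Polynomial.map_C, ← hξdef] at this
  have hmapbez : (u.map f) * ξ ^ (p.rootMultiplicity lam) + (v.map f) * (q.map f) = 1 := by
    have := congrArg (Polynomial.map f) huv
    rwa [Polynomial.map_add, Polynomial.map_mul, Polynomial.map_mul, Polynomial.map_pow,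
      Polynomial.map_sub, Polynomial.map_X, Polynomial.map_C, Polynomial.map_one, ← hξdef] at this
  have hψ2 : ψ = Polynomial.aeval φ (ξ ^ p.rootMultiplicity lam) := by
    rw [hψ, map_pow]
    congr 1
    rw [hξdef, map_sub, Polynomial.aeval_X, Polynomial.aeval_C,
      Module.algebraMap_end_eq_smul_id]
    rfl
  have hPa : Polynomial.aeval φ (p.map f) = 0 := hP
  have hker : ∀ z : M, (Polynomial.aeval φ ((v.map f) * (q.map f))) z ∈ LinearMap.ker ψ := by
    intro z
    rw [LinearMap.mem_ker, hψ2, ← Module.End.mul_apply, ← map_mul]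
    have he : ξ ^ (p.rootMultiplicity lam) * ((v.map f) * (q.map f)) = (v.map f) * (p.map f) := by
      rw [← hmapfac]; ring
    rw [he, map_mul, Module.End.mul_apply, hPa, LinearMap.zero_apply, map_zero]
  have hrange : ∀ z : M,
      (Polynomial.aeval φ ((u.map f) * ξ ^ (p.rootMultiplicity lam))) z ∈ LinearMap.range ψ := by
    intro z
    rw [mul_comm (u.map f), map_mul, Module.End.mul_apply, ← hψ2]
    exact ⟨_, rfl⟩
  have hdecomp : ∀ z : M,
      z = (Polynomial.aeval φ ((u.map f) * ξ ^ (p.rootMultiplicity lam))) z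
          + (Polynomial.aeval φ ((v.map f) * (q.map f))) z := by
    intro z
    have h := congrArg (fun g => (Polynomial.aeval φ g) z) hmapbez
    simp only [map_add, map_one, LinearMap.add_apply, Module.End.one_apply] at h
    exact h.symm
  have hcompl : IsCompl (LinearMap.ker ψ) (LinearMap.range ψ) := by
    constructor
    · rw [Submodule.disjoint_def]
      intro z hzk hzr
      obtain ⟨w, hw⟩ := hzr
      have h1 : (Polynomial.aeval φ ((u.map f) * ξ ^ (p.rootMultiplicity lam))) z = 0 := by
        rw [map_mul, Module.End.mul_apply, ← hψ2, LinearMap.mem_ker.mp hzk, map_zero]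
      have h2 : (Polynomial.aeval φ ((v.map f) * (q.map f))) z = 0 := by
        rw [← hw, hψ2, ← Module.End.mul_apply, ← map_mul]
        have he : (v.map f) * (q.map f) * ξ ^ (p.rootMultiplicity lam)
            = (v.map f) * (p.map f) := by rw [← hmapfac]; ring
        rw [he, map_mul, Module.End.mul_apply, hPa, LinearMap.zero_apply, map_zero]
      rw [hdecomp z, h1, h2, add_zero]
    · rw [codisjoint_iff, Submodule.eq_top_iff']
      intro z
      rw [Submodule.mem_sup]
      exact ⟨_, hker z, _, hrange z, by rw [add_comm]; exact (hdecomp z).symm⟩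
  have hroot : p.IsRoot lam := by
    have hmin : (minpoly k A).IsRoot lam := Module.End.hasEigenvalue_iff_isRoot.mp hlam
    obtain ⟨g, hg⟩ := LinearMap.minpoly_dvd_charpoly A
    show p.eval lam = 0
    rw [hpdef, hg, Polynomial.eval_mul]
    rw [show (minpoly k A).eval lam = 0 from hmin, zero_mul]
  have hμpos : 0 < p.rootMultiplicity lam := (Polynomial.rootMultiplicity_pos hp0).mpr hroot
  have hkerne : LinearMap.ker ψ ≠ ⊥ := by
    intro hbot
    have htop : LinearMap.range ψ = ⊤ := by
      have h := hcompl.codisjoint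
      rwa [codisjoint_iff, hbot, bot_sup_eq] at h
    set g : Module.End k (M ⧸ mM) := A - lam • 1 with hgdef
    have hstep : ∀ z : M, g (Submodule.Quotient.mk z)
        = Submodule.Quotient.mk ((φ - algebraMap k R lam • 1) z) := by
      intro z
      rw [show (φ - algebraMap k R lam • 1) z = φ z - lam • z by
        rw [LinearMap.sub_apply, LinearMap.smul_apply, Module.End.one_apply, algebraMap_smul]]
      rw [hgdef, LinearMap.sub_apply, LinearMap.smul_apply, Module.End.one_apply, hA]
      rw [show (Submodule.Quotient.mk (φ z - lam • z) : M ⧸ mM)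
            = Submodule.Quotient.mk (φ z) - Submodule.Quotient.mk (lam • z) from
          Submodule.Quotient.mk_sub mM]
      rw [Submodule.Quotient.mk_smul mM lam z]
    have hmk : ∀ (t : ℕ) (z : M), (g ^ t) (Submodule.Quotient.mk z)
        = Submodule.Quotient.mk (((φ - algebraMap k R lam • 1) ^ t) z) := by
      intro t
      induction t with
      | zero => intro z; rw [pow_zero, pow_zero, Module.End.one_apply, Module.End.one_apply]
      | succ t ih =>
        intro z
        rw [pow_succ, pow_succ, Module.End.mul_apply, Module.End.mul_apply, hstep, ih]
    have hsurj : Function.Surjective (g ^ p.rootMultiplicity lam) := by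
      intro w
      obtain ⟨z, rfl⟩ := Submodule.Quotient.mk_surjective mM w
      have hzr : z ∈ LinearMap.range ψ := htop ▸ Submodule.mem_top
      obtain ⟨y, hy⟩ := hzr
      refine ⟨Submodule.Quotient.mk y, ?_⟩
      rw [hmk, ← hψ, hy]
    have hinj : Function.Injective ((g ^ p.rootMultiplicity lam) : Module.End k (M ⧸ mM)) :=
      LinearMap.injective_iff_surjective.mpr hsurj
    obtain ⟨w, hw⟩ := hlam.exists_hasEigenvector
    have hgw : g w = 0 := by
      rw [hgdef, LinearMap.sub_apply, LinearMap.smul_apply, Module.End.one_apply,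
        hw.apply_eq_smul, sub_self]
    have hpw : (g ^ p.rootMultiplicity lam) w = 0 := by
      obtain ⟨t, ht⟩ : ∃ t, p.rootMultiplicity lam = t + 1 :=
        ⟨_, (Nat.succ_pred_eq_of_pos hμpos).symm⟩
      rw [ht, pow_succ, Module.End.mul_apply, hgw, map_zero]
    exact hw.2 (hinj (by rw [hpw, map_zero]))
  -- gradedness
  have hpow : ∀ (t : ℕ) (i : ℕ), ∀ z ∈ ℳ i, ((φ - algebraMap k R lam • 1) ^ t) z ∈ ℳ i := by
    intro t
    induction t with
    | zero => intro i z hz; rw [pow_zero, Module.End.one_apply]; exact hz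
    | succ t ih =>
      intro i z hz
      rw [pow_succ, Module.End.mul_apply]
      refine ih i _ ?_
      rw [LinearMap.sub_apply, LinearMap.smul_apply, Module.End.one_apply, algebraMap_smul]
      exact sub_mem (hφ i z hz) ((ℳ i).smul_mem lam hz)
  have hψgr : ∀ i : ℕ, ∀ z ∈ ℳ i, ψ z ∈ ℳ i := by
    intro i z hz
    rw [hψ]
    exact hpow _ i z hz
  have hcomm : ∀ (z : M) (i : ℕ),
      (DirectSum.decompose ℳ (ψ z) i : M) = ψ (DirectSum.decompose ℳ z i : M) :=
    fun z i => decompose_endo_comm ℳ ψ hψgr z i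
  refine ⟨hcompl, hkerne, ?_, ?_⟩
  · intro z hz i
    rw [LinearMap.mem_ker, ← hcomm z i, LinearMap.mem_ker.mp hz]
    simp
  · intro z hz i
    obtain ⟨w, hw⟩ := hz
    exact ⟨(DirectSum.decompose ℳ w i : M), by rw [← hcomm w i, hw]⟩
end

section
/- Let A be a k-linear endomorphism of V, let e_0 be a natural number such that p^{e_0} > dim_k V, and let e ≥ 1 be such that every eigenvalue of A in an algebraic closure of k lies in the subfield 𝔽_{p^e}. If λ ∈ k is an eigenvalue of A, then the endomorphism B = (A − λ·id_V)^{p^{e_0}·(p^e − 1)} is idempotent: B ∘ B = B. -/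
open Polynomial


/-- Let `p` be a prime, `k` a field of characteristic `p` that is algebraic
over `𝔽_p`, and `V` a nonzero finite-dimensional `k`-vector space. Let `A` be a `k`-linear
endomorphism of `V`, let `e₀` be such that `p^e₀ > dim_k V`, and let `e ≥ 1` be such that
every eigenvalue of `A` in an algebraic closure of `k` (i.e. every root of the characteristic
polynomial of `A`) lies in `𝔽_{p^e}` (i.e. satisfies `x^(p^e) = x`). If `λ ∈ k` is an
eigenvalue of `A`, then `B = (A - λ·id)^(p^e₀·(p^e - 1))` is idempotent: `B ∘ B = B`. -/
theorem statement_8 {p : ℕ} [Fact p.Prime] {k : Type*} [Field k] [CharP k p]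
    [Algebra (ZMod p) k] [Algebra.IsAlgebraic (ZMod p) k]
    {V : Type*} [AddCommGroup V] [Module k V] [FiniteDimensional k V] [Nontrivial V]
    (A : Module.End k V) (e₀ e : ℕ)
    (he₀ : Module.finrank k V < p ^ e₀) (he : 1 ≤ e)
    (heig : ∀ x : AlgebraicClosure k,
      Polynomial.aeval x (LinearMap.charpoly A) = 0 → x ^ (p ^ e) = x)
    (lam : k) (hlam : Module.End.HasEigenvalue A lam) :
    ((A - lam • 1) ^ (p ^ e₀ * (p ^ e - 1))) * ((A - lam • 1) ^ (p ^ e₀ * (p ^ e - 1)))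
      = (A - lam • 1) ^ (p ^ e₀ * (p ^ e - 1)) := by
  classical
  have hp : p.Prime := Fact.out
  set m : ℕ := p ^ e₀ * (p ^ e - 1) with hm
  set K := AlgebraicClosure k
  set ι : k →+* K := algebraMap k K with hι
  set P : k[X] := LinearMap.charpoly A with hP
  -- basic numerology
  have hpe1 : 1 ≤ p ^ e - 1 := by
    have : 2 ≤ p ^ e := le_trans hp.two_le (Nat.le_self_pow (by omega) p)
    omega
  have hpe0m : p ^ e₀ ≤ m := Nat.le_mul_of_pos_right _ hpe1
  have hm0 : 0 < m := lt_of_lt_of_le (Nat.pow_pos (n := e₀) hp.pos) hpe0m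
  -- the polynomial Q over k
  set Q : k[X] := (X - C lam) ^ (2 * m) - (X - C lam) ^ m with hQ
  set c : K := ι lam with hc
  set g : K[X] := (X - C c) ^ (2 * m) - (X - C c) ^ m with hg
  have hQg : Q.map ι = g := by
    simp [hQ, hg, Polynomial.map_sub, Polynomial.map_pow, hc]
  have hgfac : g = (X - C c) ^ m * ((X - C c) ^ m - 1) := by
    rw [hg, two_mul, pow_add]; ring
  have hg0 : g ≠ 0 := by
    rw [hgfac]
    refine mul_ne_zero (pow_ne_zero _ (X_sub_C_ne_zero c)) ?_
    intro h
    have := congrArg (Polynomial.eval c) h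
    simp [zero_pow hm0.ne'] at this
  -- lam satisfies lam ^ p^e = lam (it is a root of charpoly)
  have hlamroot : (P.map ι).IsRoot c := by
    have h1 : (minpoly k A).IsRoot lam := Module.End.hasEigenvalue_iff_isRoot.mp hlam
    have h2 : minpoly k A ∣ P := LinearMap.minpoly_dvd_charpoly A
    have h3 : P.IsRoot lam := h1.dvd h2
    rw [IsRoot, eval_map, hc, eval₂_hom, h3, map_zero]
  have hclam : c ^ (p ^ e) = c := by
    apply heig
    rw [aeval_def, ← eval_map]; exact hlamroot
  -- key divisibility over K
  have hdvd' : P.map ι ∣ g := by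
    apply Polynomial.Splits.dvd_of_roots_le_roots (IsAlgClosed.splits (P.map ι))
    · exact (LinearMap.charpoly_monic A).map ι |>.ne_zero
    · rw [Multiset.le_iff_count]
      intro x
      rw [count_roots, count_roots]
      by_cases hx : (P.map ι).IsRoot x
      · -- multiplicity in P bounded by natDegree
        have hb : (P.map ι).rootMultiplicity x ≤ Module.finrank k V := by
          have := Polynomial.natDegree_le_of_dvd (Polynomial.pow_rootMultiplicity_dvd (P.map ι) x)
            ((LinearMap.charpoly_monic A).map ι).ne_zero
          rwa [natDegree_pow, natDegree_X_sub_C, mul_one,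
            Polynomial.natDegree_map, LinearMap.charpoly_natDegree] at this
        refine le_trans (le_trans hb he₀.le) ?_
        rw [Polynomial.le_rootMultiplicity_iff hg0]
        by_cases hxl : x = c
        · subst hxl
          exact dvd_trans (pow_dvd_pow _ hpe0m) (hgfac ▸ Dvd.intro _ rfl)
        · -- x ≠ c
          have hxpe : x ^ (p ^ e) = x := by
            apply heig
            rw [aeval_def, ← eval_map]; exact hx
          have hν : (x - c) ^ (p ^ e) = x - c := by
            rw [sub_pow_char_pow, hxpe, hclam]
          have hν1 : (x - c) ^ (p ^ e - 1) = 1 := by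
            have hne : x - c ≠ 0 := sub_ne_zero.mpr hxl
            have : (x - c) * (x - c) ^ (p ^ e - 1) = (x - c) * 1 := by
              rw [mul_one, ← pow_succ',
                Nat.sub_add_cancel (Nat.one_le_iff_ne_zero.mpr (pow_ne_zero e hp.pos.ne'))]
              exact hν
            exact mul_left_cancel₀ hne this
          have hdiv1 : (X - C x) ∣ ((X - C c) ^ (p ^ e - 1) - 1) := by
            rw [dvd_iff_isRoot]
            simp [IsRoot, hν1]
          have hdiv2 : (X - C x) ^ (p ^ e₀) ∣ ((X - C c) ^ (p ^ e - 1) - 1) ^ (p ^ e₀) :=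
            pow_dvd_pow_of_dvd hdiv1 _
          have hfrob : ((X - C c) ^ (p ^ e - 1) - 1) ^ (p ^ e₀) = (X - C c) ^ m - 1 := by
            rw [sub_pow_char_pow, ← pow_mul, one_pow, Nat.mul_comm]
          rw [hfrob] at hdiv2
          exact dvd_trans hdiv2 (hgfac ▸ Dvd.intro_left _ rfl)
      · rw [rootMultiplicity_eq_zero hx]
        exact Nat.zero_le _
  -- descend to k
  have hdvd : P ∣ Q := by
    rw [← Polynomial.map_dvd_map ι ι.injective (LinearMap.charpoly_monic A), hQg]
    exact hdvd'
  -- apply aeval at A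
  have hQ0 : Polynomial.aeval A Q = 0 := by
    obtain ⟨r, hr⟩ := hdvd
    rw [hr, map_mul, LinearMap.aeval_self_charpoly, zero_mul]
  have hXC : Polynomial.aeval A (X - C lam) = A - lam • 1 := by
    simp [Module.algebraMap_end_eq_smul_id]
    rfl
  rw [hQ, map_sub, map_pow, map_pow, hXC, sub_eq_zero] at hQ0
  rw [← pow_add, ← two_mul, hQ0]
end

section
/- Let A be a k-linear endomorphism of V, let e_0 be a natural number such that p^{e_0} > dim_k V, and let e ≥ 1 be such that every eigenvalue of A in an algebraic closure of k lies in the subfield 𝔽_{p^e}. Suppose λ ∈ k is an eigenvalue of A and A has at least one other eigenvalue in the algebraic closure of k distinct from λ. Then the idempotent B = (A − λ·id_V)^{p^{e_0}·(p^e − 1)} is nontrivial: B ≠ 0 and B ≠ id_V. -/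
open Polynomial

/-- Over a field, any root of the characteristic polynomial of an endomorphism of a
finite-dimensional space is an eigenvalue. -/
lemma eval_charpoly_eigenvalue {K W : Type*} [Field K] [AddCommGroup W] [Module K W]
    [FiniteDimensional K W] (f : Module.End K W) (x : K)
    (h : Polynomial.eval x (LinearMap.charpoly f) = 0) :
    Module.End.HasEigenvalue f x := by
  classical
  rw [Module.End.hasEigenvalue_iff, Module.End.eigenspace_def]
  intro hker
  -- then f - x • 1 is a unit, so its determinant is nonzero
  have hunit : IsUnit (f - x • (1 : Module.End K W)) :=
    (LinearMap.isUnit_iff_ker_eq_bot _).mpr hker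
  have hdetne : LinearMap.det (f - x • (1 : Module.End K W)) ≠ 0 :=
    IsUnit.ne_zero (LinearMap.isUnit_det _ hunit)
  apply hdetne
  -- compute the determinant via a basis
  obtain b := Module.finBasis K W
  have hM : LinearMap.det (f - x • (1 : Module.End K W)) =
      Matrix.det (LinearMap.toMatrix b b f - Matrix.diagonal (fun _ => x)) := by
    rw [← LinearMap.det_toMatrix b]
    congr 1
    rw [map_sub, map_smul]
    congr 1
    rw [LinearMap.toMatrix_one, Matrix.smul_one_eq_diagonal]
  rw [hM]
  set M := LinearMap.toMatrix b b f with hMdef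
  have hc : Polynomial.eval x (Matrix.charpoly M) = 0 := by
    rwa [LinearMap.charpoly_toMatrix f b]
  have h1 : Polynomial.eval x (Matrix.charpoly M) =
      Matrix.det ((Matrix.charmatrix M).map (Polynomial.evalRingHom x)) := by
    rw [Matrix.charpoly, ← RingHom.mapMatrix_apply, ← RingHom.map_det]
    rfl
  have h2 : (Matrix.charmatrix M).map (Polynomial.evalRingHom x) =
      Matrix.diagonal (fun _ => x) - M := by
    ext i j
    by_cases hij : i = j
    · subst hij
      simp [Matrix.charmatrix_apply_eq]
    · simp [Matrix.charmatrix_apply_ne _ _ _ hij, Matrix.diagonal_apply_ne _ hij]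
  rw [h1, h2] at hc
  rw [← neg_sub, Matrix.det_neg, hc, mul_zero]

/-- In the setting of Statement 8, if moreover `A` has an eigenvalue in the
algebraic closure of `k` distinct from `λ`, then the idempotent
`B = (A - λ·id)^(p^e₀·(p^e - 1))` is nontrivial: `B ≠ 0` and `B ≠ id`. -/
theorem statement_9 {p : ℕ} [Fact p.Prime] {k : Type*} [Field k] [CharP k p]
    [Algebra (ZMod p) k] [Algebra.IsAlgebraic (ZMod p) k]
    {V : Type*} [AddCommGroup V] [Module k V] [FiniteDimensional k V] [Nontrivial V]
    (A : Module.End k V) (e₀ e : ℕ)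
    (he₀ : Module.finrank k V < p ^ e₀) (he : 1 ≤ e)
    (heig : ∀ x : AlgebraicClosure k,
      Polynomial.aeval x (LinearMap.charpoly A) = 0 → x ^ (p ^ e) = x)
    (lam : k) (hlam : Module.End.HasEigenvalue A lam)
    (hother : ∃ x : AlgebraicClosure k,
      Polynomial.aeval x (LinearMap.charpoly A) = 0 ∧ x ≠ algebraMap k (AlgebraicClosure k) lam) :
    (A - lam • 1) ^ (p ^ e₀ * (p ^ e - 1)) ≠ 0 ∧
    (A - lam • 1) ^ (p ^ e₀ * (p ^ e - 1)) ≠ 1 := by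
  have hp2 : 2 ≤ p := (Fact.out : p.Prime).two_le
  set m := p ^ e₀ * (p ^ e - 1) with hm
  have hm1 : 1 ≤ m := by
    have h1 : 1 ≤ p ^ e₀ := Nat.one_le_pow _ _ (by omega)
    have h2 : p ^ 1 ≤ p ^ e := Nat.pow_le_pow_right (by omega) he
    have : 2 ≤ p ^ e := le_trans hp2 (by simpa using h2)
    calc 1 = 1 * 1 := by ring
    _ ≤ p ^ e₀ * (p ^ e - 1) := Nat.mul_le_mul h1 (by omega)
  set N := A - lam • (1 : Module.End k V) with hN
  constructor
  · -- B ≠ 0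
    intro hzero
    obtain ⟨x, hx, hxne⟩ := hother
    -- x is an eigenvalue of the base change of A
    have hx' : Polynomial.eval x ((LinearMap.charpoly A).map (algebraMap k (AlgebraicClosure k))) = 0 := by
      rw [Polynomial.eval_map, ← Polynomial.aeval_def]
      exact hx
    have hxchar : Polynomial.eval x (LinearMap.charpoly (LinearMap.baseChange (AlgebraicClosure k) A)) = 0 := by
      rwa [LinearMap.charpoly_baseChange]
    have heigx : Module.End.HasEigenvalue (LinearMap.baseChange (AlgebraicClosure k) A) x :=
      eval_charpoly_eigenvalue _ _ hxchar
    obtain ⟨w, hw⟩ := heigx.exists_hasEigenvector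
    -- w is an eigenvector of baseChange N for the nonzero eigenvalue x - lam
    have hNw : Module.End.HasEigenvector (LinearMap.baseChange (AlgebraicClosure k) N) (x - algebraMap k (AlgebraicClosure k) lam) w := by
      refine ⟨Module.End.mem_eigenspace_iff.mpr ?_, hw.2⟩
      have : LinearMap.baseChange (AlgebraicClosure k) N =
          LinearMap.baseChange (AlgebraicClosure k) A - algebraMap k (AlgebraicClosure k) lam • 1 := by
        rw [hN, LinearMap.baseChange_sub, LinearMap.baseChange_smul, LinearMap.baseChange_one,
          algebraMap_smul]
      rw [this]
      rw [LinearMap.sub_apply, LinearMap.smul_apply, Module.End.one_apply,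
        hw.apply_eq_smul, sub_smul]
    have hpow := Module.End.HasEigenvector.pow_apply hNw m
    rw [← LinearMap.baseChange_pow, hzero] at hpow
    simp only [LinearMap.baseChange_zero, LinearMap.zero_apply] at hpow
    have hxlam : x - algebraMap k (AlgebraicClosure k) lam ≠ 0 := sub_ne_zero.mpr hxne
    exact hw.2 (by
      have := smul_ne_zero (pow_ne_zero m hxlam) hw.2
      rw [← hpow] at this
      exact absurd rfl this)
  · -- B ≠ 1
    intro hone
    obtain ⟨v, hv⟩ := hlam.exists_hasEigenvector
    have hNv : N v = 0 := by
      rw [hN, LinearMap.sub_apply, LinearMap.smul_apply, Module.End.one_apply,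
        hv.apply_eq_smul, sub_self]
    have : (N ^ m) v = 0 := by
      have hsplit : N ^ m = N ^ (m - 1) * N := by
        rw [← pow_succ]
        congr 1
        omega
      rw [hsplit, Module.End.mul_apply, hNv, map_zero]
    rw [hone] at this
    exact hv.2 (by simpa using this)
end

section
/- Let k be a field of characteristic p > 0 and let m = p^d · m_0 with d ≥ 1 and p not dividing m_0. Let f = λ^m + c_{m−1}λ^{m−1} + ⋯ + c_1λ + c_0 ∈ k[λ] be a monic polynomial and let K be an algebraic closure of k. Then f = (λ − y)^m for some y ∈ K if and only if both: (i) c_j = 0 for every j with 0 ≤ j < m such that p^d does not divide m − j, and (ii) for every i with 1 ≤ i ≤ m_0 one has C(m_0, i) · c_{m−p^d}^i = m_0^i · c_{m−i·p^d}, where C(m_0, i) denotes the binomial coefficient (viewed in k). -/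
open Polynomial

lemma coeff_pow_aux {F : Type*} [CommRing F] (q m₀ : ℕ) (hq : 0 < q) (w : F) (n : ℕ) :
    (((X : F[X])^q + C w)^m₀).coeff n =
      if q ∣ n ∧ n ≤ q * m₀ then (m₀.choose (n / q) : F) * w ^ (m₀ - n / q) else 0 := by
  rw [add_pow, Polynomial.finset_sum_coeff]
  have hterm : ∀ i ∈ Finset.range (m₀+1),
      ((((X:F[X])^q)^i * (C w)^(m₀-i) * (m₀.choose i : F[X])).coeff n)
      = if n = q * i then (m₀.choose i : F) * w^(m₀-i) else 0 := by
    intro i _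
    rw [← pow_mul, ← C_pow, ← C_eq_natCast, mul_assoc, ← C_mul, mul_comm ((X:F[X])^(q*i)),
      coeff_C_mul, coeff_X_pow]
    by_cases h : n = q * i <;> simp [h, mul_comm]
  rw [Finset.sum_congr rfl hterm]
  by_cases h : q ∣ n ∧ n ≤ q * m₀
  · obtain ⟨⟨s, hs⟩, hle⟩ := h
    have hsle : s ≤ m₀ := by
      by_contra hc
      push_neg at hc
      exact absurd (hs ▸ hle) (by nlinarith)
    have hsq : n / q = s := by rw [hs, Nat.mul_div_cancel_left _ hq]
    rw [Finset.sum_eq_single s]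
    · rw [if_pos (by omega : n = q * s), hsq, if_pos ⟨⟨s, hs⟩, hle⟩]
    · intro b _ hb
      rw [if_neg]
      intro heq
      exact hb (Nat.eq_of_mul_eq_mul_left hq (hs ▸ heq)).symm
    · intro hmem
      exact absurd (Finset.mem_range.mpr (Nat.lt_succ_of_le hsle)) hmem
  · rw [if_neg h, Finset.sum_eq_zero]
    intro i hi
    rw [if_neg]
    rintro rfl
    exact h ⟨⟨i, rfl⟩, Nat.mul_le_mul_left q (Nat.lt_succ_iff.mp (Finset.mem_range.mp hi))⟩



/-- Let `k` be a field of characteristic `p > 0`, let `m = p^d · m₀` with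
`d ≥ 1` and `p ∤ m₀`, let `f ∈ k[λ]` be monic of degree `m`, and let `K` be an algebraic
closure of `k`. Then `f = (λ - y)^m` for some `y ∈ K` if and only if (i) `c_j = 0` for every
`j < m` with `p^d ∤ (m - j)`, and (ii) `C(m₀,i) · c_{m-p^d}^i = m₀^i · c_{m-i·p^d}` for every
`1 ≤ i ≤ m₀`. -/
theorem statement_17 {k : Type*} [Field k] (p : ℕ) (hp : p.Prime) [CharP k p]
    (d m₀ m : ℕ) (hd : 1 ≤ d) (hm₀ : ¬ p ∣ m₀) (hm : m = p ^ d * m₀)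
    (f : Polynomial k) (hmonic : f.Monic) (hdeg : f.natDegree = m) :
    (∃ y : AlgebraicClosure k,
        f.map (algebraMap k (AlgebraicClosure k)) = (Polynomial.X - Polynomial.C y) ^ m) ↔
      ((∀ j : ℕ, j < m → ¬ p ^ d ∣ (m - j) → f.coeff j = 0) ∧
       (∀ i : ℕ, 1 ≤ i → i ≤ m₀ →
         (m₀.choose i : k) * f.coeff (m - p ^ d) ^ i = (m₀ : k) ^ i * f.coeff (m - i * p ^ d))) := by
  haveI : Fact p.Prime := ⟨hp⟩
  set K := AlgebraicClosure k with hK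
  let φ := algebraMap k K
  have hφ : Function.Injective φ := φ.injective
  have hq : 0 < p ^ d := pow_pos hp.pos d
  have hm₀pos : 0 < m₀ := Nat.pos_of_ne_zero (fun h => hm₀ (h ▸ dvd_zero p))
  have hm₀k : (m₀ : k) ≠ 0 := fun h => hm₀ ((CharP.cast_eq_zero_iff k p m₀).mp h)
  have hdvdm : p ^ d ∣ m := ⟨m₀, hm⟩
  have hsub : ∀ i, i ≤ m₀ → m - i * p ^ d = p ^ d * (m₀ - i) := by
    intro i hi
    rw [hm, Nat.mul_sub, mul_comm i]
  constructor
  · rintro ⟨y, hy⟩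
    haveI : CharP K p := charP_of_injective_algebraMap hφ p
    have key : f.map φ = ((X : K[X])^(p^d) + C (-(y^(p^d))))^m₀ := by
      rw [hy, hm, pow_mul, sub_pow_char_pow, map_neg, C_pow, sub_eq_add_neg]
    have hc : ∀ n, φ (f.coeff n) =
        if p ^ d ∣ n ∧ n ≤ p ^ d * m₀ then
          (m₀.choose (n / p ^ d) : K) * (-(y^(p^d))) ^ (m₀ - n / p ^ d) else 0 := by
      intro n
      rw [← coeff_map, key, coeff_pow_aux _ _ hq]
    have hcoeff : ∀ i, 1 ≤ i → i ≤ m₀ →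
        φ (f.coeff (m - i * p ^ d)) = (m₀.choose i : K) * (-(y^(p^d))) ^ i := by
      intro i hi1 hi2
      rw [hc, if_pos]
      · rw [hsub i hi2, Nat.mul_div_cancel_left _ hq, Nat.choose_symm hi2,
          Nat.sub_sub_self hi2]
      · exact ⟨⟨m₀ - i, hsub i hi2⟩, (hsub i hi2) ▸ Nat.mul_le_mul_left _ (Nat.sub_le _ _)⟩
    constructor
    · intro j hj hnd
      have hnj : ¬ p ^ d ∣ j := fun hdj => hnd (Nat.dvd_sub hdvdm hdj)
      apply hφ
      rw [hc, if_neg (fun hcond => hnj hcond.1), map_zero]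
    · intro i hi1 hi2
      apply hφ
      have h1 : φ (f.coeff (m - p ^ d)) = (m₀ : K) * (-(y^(p^d))) := by
        have := hcoeff 1 le_rfl hm₀pos
        rwa [one_mul, Nat.choose_one_right, pow_one] at this
      rw [map_mul, map_mul, map_pow, map_pow, map_natCast, map_natCast, h1,
        hcoeff i hi1 hi2]
      ring
  · rintro ⟨h1, h2⟩
    set w : k := f.coeff (m - p ^ d) / (m₀ : k) with hw
    have hfw : f = ((X : k[X])^(p^d) + C w)^m₀ := by
      ext n
      rw [coeff_pow_aux _ _ hq]
      by_cases hdvd : p ^ d ∣ n ∧ n ≤ p ^ d * m₀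
      · rw [if_pos hdvd]
        obtain ⟨⟨s, hs⟩, hle⟩ := hdvd
        have hsle : s ≤ m₀ := by
          by_contra hc
          push_neg at hc
          exact absurd (hs ▸ hle) (by nlinarith)
        have hsq : n / p ^ d = s := by rw [hs, Nat.mul_div_cancel_left _ hq]
        rw [hsq]
        rcases eq_or_lt_of_le hsle with heq | hlt
        · subst heq
          have hn : n = m := by rw [hs, hm]
          rw [hn, Nat.choose_self, Nat.sub_self, pow_zero, Nat.cast_one, one_mul, ← hdeg]
          exact hmonic.coeff_natDegree
        · set i := m₀ - s with hi
          have hi1 : 1 ≤ i := by omega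
          have hi2 : i ≤ m₀ := Nat.sub_le _ _
          have hn : n = m - i * p ^ d := by rw [hsub i hi2, hi, Nat.sub_sub_self hsle, hs]
          have hchoose : m₀.choose s = m₀.choose i := by
            rw [hi, Nat.choose_symm hsle]
          have hpow : m₀ - s = i := rfl
          have key := h2 i hi1 hi2
          rw [hn, hchoose]
          have hm₀pow : ((m₀ : k)) ^ i ≠ 0 := pow_ne_zero _ hm₀k
          field_simp [hw]
          have hinv : (m₀:k)^i * ((m₀:k)⁻¹)^i = 1 := by rw [← mul_pow, mul_inv_cancel₀ hm₀k, one_pow]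
          linear_combination (-((m₀:k)⁻¹)^i) * key - f.coeff (m - i * p ^ d) * hinv
      · rw [if_neg hdvd]
        rcases lt_or_ge m n with hlt | hle
        · exact coeff_eq_zero_of_natDegree_lt (hdeg ▸ hlt)
        · have hnm : n ≠ m := by
            rintro rfl
            exact hdvd ⟨hdvdm, le_of_eq hm⟩
          have hnd : ¬ p ^ d ∣ (m - n) := by
            intro hds
            have hn : p ^ d ∣ n := by
              have := Nat.dvd_sub hdvdm hds
              rwa [Nat.sub_sub_self hle] at this
            exact hdvd ⟨hn, hm ▸ hle⟩
          exact h1 n (lt_of_le_of_ne hle hnm) hnd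
    have hmap : f.map φ = ((X : K[X])^(p^d) + C (φ w))^m₀ := by
      rw [hfw]
      simp [Polynomial.map_pow, Polynomial.map_add, Polynomial.map_C, Polynomial.map_X]
    obtain ⟨y, hy⟩ := IsAlgClosed.exists_root ((X : K[X])^(p^d) + C (φ w))
      (by rw [degree_X_pow_add_C hq]; exact_mod_cast hq.ne')
    have hyw : φ w = -(y ^ (p ^ d)) := by
      have := hy
      simp only [IsRoot.def, eval_add, eval_pow, eval_X, eval_C] at this
      linear_combination this
    refine ⟨y, ?_⟩
    haveI : CharP K p := charP_of_injective_algebraMap hφ p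
    rw [hmap, hyw, hm, pow_mul, sub_pow_char_pow, map_neg, C_pow, sub_eq_add_neg]
end

section
/- If the image of the reduction map End_R(M) → End_k(M/𝔪M), sending φ to the induced k-linear map on M/𝔪M, is a one-dimensional k-vector space, then M is indecomposable: M is not the internal direct sum of two nonzero R-submodules. -/
/-- Auxiliary Nakayama lemma: a direct summand of a finite module over a Noetherian
local ring contained in `𝔪 • M` is trivial. -/
lemma aux_summand_le_smul_eq_bot {R M : Type*} [CommRing R] [IsNoetherianRing R]
    [IsLocalRing R] [AddCommGroup M] [Module R M] [Module.Finite R M]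
    {N₁ N₂ : Submodule R M} (hc : IsCompl N₁ N₂)
    (h : N₂ ≤ (IsLocalRing.maximalIdeal R) • (⊤ : Submodule R M)) : N₂ = ⊥ := by
  have hNoeth : IsNoetherian R M := isNoetherian_of_isNoetherianRing_of_finite R M
  set I := IsLocalRing.maximalIdeal R
  have htop : (⊤ : Submodule R M) = N₁ ⊔ N₂ := hc.sup_eq_top.symm
  have hsmul : I • (⊤ : Submodule R M) = I • N₁ ⊔ I • N₂ := by
    rw [htop, Submodule.smul_sup]
  have hle : N₂ ≤ I • N₂ := by
    intro x hx
    have hx' : x ∈ I • N₁ ⊔ I • N₂ := by rw [← hsmul]; exact h hx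
    obtain ⟨a, ha, b, hb, hab⟩ := Submodule.mem_sup.mp hx'
    have ha1 : a ∈ N₁ := Submodule.smul_le_right ha
    have hb2 : b ∈ N₂ := Submodule.smul_le_right hb
    have ha2 : a ∈ N₂ := by
      have : a = x - b := by rw [← hab]; abel
      rw [this]; exact N₂.sub_mem hx hb2
    have : a = 0 := by
      have := hc.inf_eq_bot
      have hmem : a ∈ N₁ ⊓ N₂ := ⟨ha1, ha2⟩
      rw [this] at hmem; simpa using hmem
    rw [← hab, this, zero_add]; exact hb
  exact Submodule.eq_bot_of_le_smul_of_le_jacobson_bot I N₂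
    (IsNoetherian.noetherian N₂) hle
    (by rw [IsLocalRing.jacobson_eq_maximalIdeal ⊥ bot_ne_top])

/-- Let `(R, 𝔪)` be a commutative Noetherian local ring with residue field
`k = R/𝔪` and `M` a nonzero finitely generated `R`-module. If the image of the reduction map
`End_R(M) → End_k(M/𝔪M)` is one-dimensional over `k` (equivalently, since this image contains
the identity, every `φ ∈ End_R(M)` induces a scalar on `M/𝔪M`, i.e. for every `φ` there is
`c ∈ R` with `φ(x) - c·x ∈ 𝔪M` for all `x`), then `M` is indecomposable. -/
theorem statement_19 {R M : Type*} [CommRing R] [IsNoetherianRing R] [IsLocalRing R]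
    [AddCommGroup M] [Module R M] [Module.Finite R M] [Nontrivial M]
    (hone : ∀ φ : Module.End R M, ∃ c : R, ∀ x : M,
      φ x - c • x ∈ (IsLocalRing.maximalIdeal R) • (⊤ : Submodule R M)) :
    ¬ ∃ N₁ N₂ : Submodule R M, N₁ ≠ ⊥ ∧ N₂ ≠ ⊥ ∧ IsCompl N₁ N₂ := by
  rintro ⟨N₁, N₂, h1, h2, hc⟩
  -- the projection onto N₁ along N₂
  set π : Module.End R M := N₁.subtype ∘ₗ (N₁.linearProjOfIsCompl N₂ hc) with hπ
  obtain ⟨c, hcval⟩ := hone π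
  have hπ1 : ∀ x ∈ N₁, π x = x := fun x hx => by
    simp [hπ, Submodule.projectionOnto_apply_left hc ⟨x, hx⟩]
    exact congrArg Subtype.val (Submodule.projectionOnto_apply_left hc ⟨x, hx⟩)
  have hπ2 : ∀ x ∈ N₂, π x = 0 := fun x hx => by
    simp [hπ, Submodule.projectionOnto_apply_right hc ⟨x, hx⟩]
    exact Submodule.projectionOnto_apply_right hc ⟨x, hx⟩
  rcases IsLocalRing.isUnit_or_isUnit_one_sub_self c with hu | hu
  · -- c is a unit: N₂ ≤ 𝔪M
    apply h2
    apply aux_summand_le_smul_eq_bot hc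
    intro x hx
    have h0 : -(c • x) ∈ (IsLocalRing.maximalIdeal R) • (⊤ : Submodule R M) := by
      have := hcval x
      rwa [hπ2 x hx, zero_sub] at this
    have h1' : c • x ∈ (IsLocalRing.maximalIdeal R) • (⊤ : Submodule R M) :=
      (Submodule.neg_mem_iff _).mp h0
    obtain ⟨u, hu'⟩ := hu
    have : x = (↑u⁻¹ : R) • (c • x) := by
      rw [smul_smul, ← hu', Units.inv_mul, one_smul]
    rw [this]
    exact Submodule.smul_mem _ _ h1'
  · -- 1 - c is a unit: N₁ ≤ 𝔪M
    apply h1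
    apply aux_summand_le_smul_eq_bot hc.symm
    intro x hx
    have h0 : (1 - c) • x ∈ (IsLocalRing.maximalIdeal R) • (⊤ : Submodule R M) := by
      have := hcval x
      rw [hπ1 x hx] at this; rwa [sub_smul, one_smul]
    obtain ⟨u, hu'⟩ := hu
    have : x = (↑u⁻¹ : R) • ((1 - c) • x) := by
      rw [smul_smul, ← hu', Units.inv_mul, one_smul]
    rw [this]
    exact Submodule.smul_mem _ _ h0
end
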